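/- The concrete FACTS model built from attention routers is L.P.E. and R.P.I.: let k, m, d, d', t ∈ ℕ with d' > 0 and α ∈ ℝ. For each label L ∈ {Δ, B, U}, let g_φ^L : ℝ^d → ℝ^{d'}, g_ψ^L : ℝ^d → ℝ^{d'}, g_φ̃^L : ℝ^d → ℝ^d be arbitrary functions and let R_L(Z, X) = softmax(φ_L(Z) ψ_L(X)^T / √d') φ̃_L(X) be the associated attention router with row-wise maps and row-wise softmax. Define Δ(Z, X) = R_Δ(Z, X), Ā(Z, X) = exp(α Δ(Z, X)) with the exponential applied entrywise, B̄(Z, X) = Δ(Z, X) ⊙ R_B(Z, X), and U(Z, X) = R_U(Z, X). Given Z_0 ∈ ℝ^{k×d} and X_1, …, X_t ∈ ℝ^{m×d}, define Z_s = Ā(Z_0, X_s) ⊙ Z_{s-1} + B̄(Z_0, X_s) ⊙ U(Z_0, X_s) for s = 1, …, t. Then for every permutation matrix σ_Z ∈ S_k and all permutation matrices σ_X^1, …, σ_X^t ∈ S_m, running the same recurrence from initial memory σ_Z Z_0 on inputs σ_X^1 X_1, …, σ_X^t X_t yields the state σ_Z Z_t at time t. -/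

import Mathlib

/-!
Left-multiplying by a permutation matrix reindexes rows. Row-wise maps commute with reindexing
rows, and reindexing the rows of `X` by a bijection permutes the columns of the softmax weights
in `softmax(φ(Z) ψ(X)ᵀ) φ̃(X)` and the rows of `φ̃(X)` alike, which the matrix product absorbs.
So every router, and hence every step of the recurrence, just follows the reindexing of `Z₀`.
-/

open Matrix
open scoped Matrix

/-- The row-wise map associated with `g`: it applies `g` to each row of its argument. -/
def rowwise {n d d' : ℕ} (g : (Fin d → ℝ) → Fin d' → ℝ)
    (M : Matrix (Fin n) (Fin d) ℝ) : Matrix (Fin n) (Fin d') ℝ :=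
  Matrix.of fun i => g (M i)

/-- Row-wise softmax: `softmax(M)_{ij} = exp(M_{ij}) / Σ_l exp(M_{il})`. -/
noncomputable def softmaxRow {n m : ℕ} (M : Matrix (Fin n) (Fin m) ℝ) : Matrix (Fin n) (Fin m) ℝ :=
  Matrix.of fun i j => Real.exp (M i j) / ∑ l, Real.exp (M i l)

/-- The attention router `R(Z, X) = softmax(φ(Z) ψ(X)ᵀ / √d') φ̃(X)`, where `φ, ψ, φ̃`
are the row-wise maps associated with `gφ, gψ, gφ'`. -/
noncomputable def router {k m d d' : ℕ} (gφ gψ : (Fin d → ℝ) → Fin d' → ℝ) (gφ' : (Fin d → ℝ) → Fin d → ℝ)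
    (Z : Matrix (Fin k) (Fin d) ℝ) (X : Matrix (Fin m) (Fin d) ℝ) :
    Matrix (Fin k) (Fin d) ℝ :=
  softmaxRow ((Real.sqrt d')⁻¹ • (rowwise gφ Z * (rowwise gψ X)ᵀ)) * rowwise gφ' X
/-- The concrete FACTS recurrence built from attention routers:
`Δ = R_Δ`, `Ā = exp(α Δ)` (entrywise), `B̄ = Δ ⊙ R_B`, `U = R_U`, with
`Z_s = Ā(Z_0, X_s) ⊙ Z_{s-1} + B̄(Z_0, X_s) ⊙ U(Z_0, X_s)` for `s ≥ 1`. -/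
noncomputable def factsRouterState {k m d d' : ℕ} (α : ℝ)
    (gφΔ gψΔ : (Fin d → ℝ) → Fin d' → ℝ) (gφ'Δ : (Fin d → ℝ) → Fin d → ℝ)
    (gφB gψB : (Fin d → ℝ) → Fin d' → ℝ) (gφ'B : (Fin d → ℝ) → Fin d → ℝ)
    (gφU gψU : (Fin d → ℝ) → Fin d' → ℝ) (gφ'U : (Fin d → ℝ) → Fin d → ℝ)
    (Z0 : Matrix (Fin k) (Fin d) ℝ) (X : ℕ → Matrix (Fin m) (Fin d) ℝ) :
    ℕ → Matrix (Fin k) (Fin d) ℝ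
  | 0 => Z0
  | s + 1 =>
      ((router gφΔ gψΔ gφ'Δ Z0 (X (s + 1))).map fun x => Real.exp (α * x))
          ⊙ factsRouterState α gφΔ gψΔ gφ'Δ gφB gψB gφ'B gφU gψU gφ'U Z0 X s
        + (router gφΔ gψΔ gφ'Δ Z0 (X (s + 1)) ⊙ router gφB gψB gφ'B Z0 (X (s + 1)))
          ⊙ router gφU gψU gφ'U Z0 (X (s + 1))

lemma rowwise_submatrix {n n' d d' : ℕ} (g : (Fin d → ℝ) → Fin d' → ℝ)
    (M : Matrix (Fin n) (Fin d) ℝ) (r : Fin n' → Fin n) :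
    rowwise g (M.submatrix r id) = (rowwise g M).submatrix r id :=
  rfl

lemma softmaxRow_submatrix {n n' m m' : ℕ} (M : Matrix (Fin n) (Fin m) ℝ)
    (r : Fin n' → Fin n) (c : Fin m' ≃ Fin m) :
    softmaxRow (M.submatrix r c) = (softmaxRow M).submatrix r c := by
  ext i j
  simp only [softmaxRow, of_apply, submatrix_apply, c.sum_comp fun l => Real.exp (M (r i) l)]

lemma router_submatrix {k k' m m' d d' : ℕ} (gφ gψ : (Fin d → ℝ) → Fin d' → ℝ)
    (gφ' : (Fin d → ℝ) → Fin d → ℝ) (Z : Matrix (Fin k) (Fin d) ℝ)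
    (X : Matrix (Fin m) (Fin d) ℝ) (r : Fin k' → Fin k) (e : Fin m' ≃ Fin m) :
    router gφ gψ gφ' (Z.submatrix r id) (X.submatrix e id)
      = (router gφ gψ gφ' Z X).submatrix r id := by
  have scores :
      (Real.sqrt d')⁻¹ • ((rowwise gφ Z).submatrix r id * ((rowwise gψ X)ᵀ).submatrix id e)
        = ((Real.sqrt d')⁻¹ • (rowwise gφ Z * (rowwise gψ X)ᵀ)).submatrix r e := by
    rw [← submatrix_mul _ _ _ _ _ Function.bijective_id]
    rfl
  rw [router, router, rowwise_submatrix, rowwise_submatrix, rowwise_submatrix,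
    transpose_submatrix, scores, softmaxRow_submatrix, submatrix_mul_equiv]

lemma factsRouterState_submatrix {k k' m m' d d' : ℕ} (α : ℝ)
    (gφΔ gψΔ : (Fin d → ℝ) → Fin d' → ℝ) (gφ'Δ : (Fin d → ℝ) → Fin d → ℝ)
    (gφB gψB : (Fin d → ℝ) → Fin d' → ℝ) (gφ'B : (Fin d → ℝ) → Fin d → ℝ)
    (gφU gψU : (Fin d → ℝ) → Fin d' → ℝ) (gφ'U : (Fin d → ℝ) → Fin d → ℝ)
    (Z0 : Matrix (Fin k) (Fin d) ℝ) (X : ℕ → Matrix (Fin m) (Fin d) ℝ)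
    (r : Fin k' → Fin k) (e : ℕ → Fin m' ≃ Fin m) (t : ℕ) :
    factsRouterState α gφΔ gψΔ gφ'Δ gφB gψB gφ'B gφU gψU gφ'U
        (Z0.submatrix r id) (fun s => (X s).submatrix (e s) id) t
      = (factsRouterState α gφΔ gψΔ gφ'Δ gφB gψB gφ'B gφU gψU gφ'U Z0 X t).submatrix r id := by
  induction t with
  | zero => rfl
  | succ s ih =>
    simp only [factsRouterState, ih, router_submatrix, ← submatrix_map,
      ← submatrix_hadamard]
    rfl

theorem stmt_13_general {k m d d' : ℕ} (t : ℕ) (α : ℝ)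
    (gφΔ gψΔ : (Fin d → ℝ) → Fin d' → ℝ) (gφ'Δ : (Fin d → ℝ) → Fin d → ℝ)
    (gφB gψB : (Fin d → ℝ) → Fin d' → ℝ) (gφ'B : (Fin d → ℝ) → Fin d → ℝ)
    (gφU gψU : (Fin d → ℝ) → Fin d' → ℝ) (gφ'U : (Fin d → ℝ) → Fin d → ℝ)
    (Z0 : Matrix (Fin k) (Fin d) ℝ) (X : ℕ → Matrix (Fin m) (Fin d) ℝ)
    (σZ : Equiv.Perm (Fin k)) (σX : ℕ → Equiv.Perm (Fin m)) :
    factsRouterState α gφΔ gψΔ gφ'Δ gφB gψB gφ'B gφU gψU gφ'U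
        (σZ.permMatrix ℝ * Z0) (fun s => (σX s).permMatrix ℝ * X s) t
      = σZ.permMatrix ℝ
          * factsRouterState α gφΔ gψΔ gφ'Δ gφB gψB gφ'B gφU gψU gφ'U Z0 X t := by
  simp only [Equiv.Perm.permMatrix, PEquiv.toMatrix_toPEquiv_mul]
  exact factsRouterState_submatrix α gφΔ gψΔ gφ'Δ gφB gψB gφ'B gφU gψU gφ'U Z0 X σZ σX t

theorem stmt_13 {k m d d' : ℕ} (hd' : 0 < d') (t : ℕ) (α : ℝ)
    (gφΔ gψΔ : (Fin d → ℝ) → Fin d' → ℝ) (gφ'Δ : (Fin d → ℝ) → Fin d → ℝ)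
    (gφB gψB : (Fin d → ℝ) → Fin d' → ℝ) (gφ'B : (Fin d → ℝ) → Fin d → ℝ)
    (gφU gψU : (Fin d → ℝ) → Fin d' → ℝ) (gφ'U : (Fin d → ℝ) → Fin d → ℝ)
    (Z0 : Matrix (Fin k) (Fin d) ℝ) (X : ℕ → Matrix (Fin m) (Fin d) ℝ)
    (σZ : Equiv.Perm (Fin k)) (σX : ℕ → Equiv.Perm (Fin m)) :
    factsRouterState α gφΔ gψΔ gφ'Δ gφB gψB gφ'B gφU gψU gφ'U
        (σZ.permMatrix ℝ * Z0) (fun s => (σX s).permMatrix ℝ * X s) t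
      = σZ.permMatrix ℝ
          * factsRouterState α gφΔ gψΔ gφ'Δ gφB gψB gφ'B gφU gψU gφ'U Z0 X t :=
  stmt_13_general t α gφΔ gψΔ gφ'Δ gφB gψB gφ'B gφU gψU gφ'U Z0 X σZ σX
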